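/- (Second-order expansion of the Jensen–Shannon divergence.) Let P(·|γ) be a family of probability distributions on 𝒳 such that each map γ ↦ P(x|γ) is twice continuously differentiable on an open interval. Then for every γ in that interval, lim_{δγ→0} JS[P(·|γ), P(·|γ+δγ)] / δγ² = F(γ)/8. In particular, 8·JS[P(·|γ), P(·|γ+δγ)]/δγ² converges to the Fisher information F(γ) as δγ → 0. -/

import Mathlib

/-!
The Jensen–Shannon divergence is a sum over `x` of `ψ(t) = jsSummand (f a) (f t)` with
`f t = P(x|t)`. Since `∂ᵤ jsSummand p u = ½ log (2u / (p + u))` vanishes at `u = p`,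
both `ψ` and `ψ'` vanish at `t = a`, and `ψ''(a) = f'(a)² / (4 f(a))`. A second-order
L'Hôpital rule gives `ψ(t) / (t - a)² → f'(a)² / (8 f(a))`; summing over `x` gives `F(a) / 8`.
-/

open Finset Real Topology Filter

noncomputable def klDiv {X : Type*} [Fintype X] (p q : X → ℝ) : ℝ :=
  ∑ x : X, p x * Real.log (p x / q x)

noncomputable def jsDiv {X : Type*} [Fintype X] (p q : X → ℝ) : ℝ :=
  (1 / 2) * klDiv p (fun x => (p x + q x) / 2) + (1 / 2) * klDiv q (fun x => (p x + q x) / 2)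

noncomputable def jsSummand (p u : ℝ) : ℝ :=
  (p * log (p / ((p + u) / 2)) + u * log (u / ((p + u) / 2))) / 2

lemma jsDiv_eq_sum_jsSummand {X : Type*} [Fintype X] (p q : X → ℝ) :
    jsDiv p q = ∑ x, jsSummand (p x) (q x) := by
  simp only [jsDiv, klDiv, jsSummand, Finset.mul_sum, ← Finset.sum_add_distrib]
  exact Finset.sum_congr rfl fun x _ => by ring

lemma jsSummand_self (p : ℝ) : jsSummand p p = 0 := by
  simp [jsSummand]

lemma hasDerivAt_jsSummand {p u : ℝ} (hp : 0 < p) (hu : 0 < u) :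
    HasDerivAt (jsSummand p) (log (u / ((p + u) / 2)) / 2) u := by
  have hm : HasDerivAt (fun v => (p + v) / 2) (1 / 2) u := by
    simpa using ((hasDerivAt_id u).const_add p).div_const 2
  have hm0 : (p + u) / 2 ≠ 0 := by positivity
  have hpm := ((hasDerivAt_const u p).fun_div hm hm0).log (by positivity)
  have hum := ((hasDerivAt_id' (x := u)).fun_div hm hm0).log (by positivity)
  refine ((((hasDerivAt_const u p).mul hpm).add ((hasDerivAt_id' (x := u)).mul hum)).div_const
    2).congr_deriv ?_
  field_simp
  ring

lemma hasDerivAt_log_div_midpoint {p u : ℝ} (hp : 0 < p) (hu : 0 < u) :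
    HasDerivAt (fun v => log (v / ((p + v) / 2)) / 2) ((1 / u - 1 / (p + u)) / 2) u := by
  have hm : HasDerivAt (fun v => (p + v) / 2) (1 / 2) u := by
    simpa using ((hasDerivAt_id u).const_add p).div_const 2
  have hm0 : (p + u) / 2 ≠ 0 := by positivity
  refine ((((hasDerivAt_id' (x := u)).fun_div hm hm0).log (by positivity)).div_const
    2).congr_deriv ?_
  field_simp

lemma tendsto_div_sub_sq_of_hasDerivAt {f f' : ℝ → ℝ} {a c : ℝ}
    (hf : ∀ᶠ x in 𝓝 a, HasDerivAt f (f' x) x) (hfa : f a = 0) (hf'a : f' a = 0)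
    (hf' : HasDerivAt f' c a) :
    Tendsto (fun x => f x / (x - a) ^ 2) (𝓝[≠] a) (𝓝 (c / 2)) := by
  have hg : ∀ x, HasDerivAt (fun x => (x - a) ^ 2) (2 * (x - a)) x := fun x => by
    simpa using ((hasDerivAt_id x).sub_const a).fun_pow 2
  have hg' : ∀ᶠ x in 𝓝[≠] a, 2 * (x - a) ≠ 0 := by
    filter_upwards [self_mem_nhdsWithin] with x hx
    exact mul_ne_zero two_ne_zero (sub_ne_zero.mpr hx)
  have hf0 : Tendsto f (𝓝[≠] a) (𝓝 0) :=
    hfa ▸ hf.self_of_nhds.continuousAt.tendsto.mono_left nhdsWithin_le_nhds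
  have hg0 : Tendsto (fun x => (x - a) ^ 2) (𝓝[≠] a) (𝓝 0) := by
    have : Continuous fun x : ℝ => (x - a) ^ 2 := by fun_prop
    simpa using (this.tendsto a).mono_left nhdsWithin_le_nhds
  have hslope : Tendsto (fun x => f' x / (2 * (x - a))) (𝓝[≠] a) (𝓝 (c / 2)) := by
    refine ((hasDerivAt_iff_tendsto_slope.mp hf').div_const 2).congr' ?_
    filter_upwards [self_mem_nhdsWithin] with x hx
    rw [slope_def_field, hf'a, sub_zero, div_div, mul_comm]
  exact HasDerivAt.lhopital_zero_nhdsNE (hf.filter_mono nhdsWithin_le_nhds)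
    (.of_forall hg) hg' hf0 hg0 hslope

lemma tendsto_jsSummand_div_sq {f : ℝ → ℝ} {a : ℝ} (hf : ContDiffAt ℝ 2 f a)
    (ha : 0 < f a) :
    Tendsto (fun t => jsSummand (f a) (f t) / (t - a) ^ 2) (𝓝[≠] a)
      (𝓝 (deriv f a ^ 2 / (8 * f a))) := by
  have hfd : ∀ᶠ t in 𝓝 a, HasDerivAt f (deriv f t) t := by
    filter_upwards [hf.eventually (by simp)] with t ht
    exact (ht.differentiableAt two_ne_zero).hasDerivAt
  have hfpos : ∀ᶠ t in 𝓝 a, 0 < f t :=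
    hf.continuousAt.eventually (eventually_gt_nhds ha)
  have hf'd : HasDerivAt (deriv f) (deriv (deriv f) a) a :=
    ((hf.derivWithin (m := 1) (by norm_num)).differentiableAt one_ne_zero).hasDerivAt
  have hψ : ∀ᶠ t in 𝓝 a, HasDerivAt (fun t => jsSummand (f a) (f t))
      (log (f t / ((f a + f t) / 2)) / 2 * deriv f t) t := by
    filter_upwards [hfd, hfpos] with t hd hpos
    exact (hasDerivAt_jsSummand ha hpos).comp t hd
  have hψ' := ((hasDerivAt_log_div_midpoint ha ha).comp a hfd.self_of_nhds).mul hf'd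
  have hmid : log (f a / ((f a + f a) / 2)) / 2 = 0 := by simp
  convert tendsto_div_sub_sq_of_hasDerivAt hψ (jsSummand_self _) (by simp) hψ' using 2
  simp only [Function.comp_apply, hmid]
  field_simp
  ring

theorem stmt15_general {X : Type*} [Fintype X]
    (I : Set ℝ) (hIopen : IsOpen I)
    (P : ℝ → X → ℝ)
    (hpos : ∀ γ ∈ I, ∀ x : X, 0 < P γ x)
    (hC2 : ∀ x : X, ContDiffOn ℝ 2 (fun t => P t x) I)
    (γ : ℝ) (hγ : γ ∈ I) :
    Filter.Tendsto (fun δ : ℝ => jsDiv (P γ) (P (γ + δ)) / δ ^ 2)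
      (𝓝[≠] 0)
      (𝓝 ((∑ x : X, (deriv (fun t => P t x) γ) ^ 2 / P γ x) / 8)) ∧
    Filter.Tendsto (fun δ : ℝ => 8 * jsDiv (P γ) (P (γ + δ)) / δ ^ 2)
      (𝓝[≠] 0)
      (𝓝 (∑ x : X, (deriv (fun t => P t x) γ) ^ 2 / P γ x)) := by
  have hshift : Tendsto (γ + ·) (𝓝[≠] 0) (𝓝[≠] γ) := by
    rw [Tendsto, Filter.map_add_left_nhdsNE, add_zero]
  have hterm (x : X) : Tendsto (fun δ => jsSummand (P γ x) (P (γ + δ) x) / δ ^ 2) (𝓝[≠] 0)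
      (𝓝 (deriv (fun t => P t x) γ ^ 2 / (8 * P γ x))) := by
    have hx := tendsto_jsSummand_div_sq ((hC2 x).contDiffAt (hIopen.mem_nhds hγ)) (hpos γ hγ x)
    simpa [Function.comp_def] using hx.comp hshift
  have hJS := tendsto_finsetSum Finset.univ fun x _ => hterm x
  simp only [← Finset.sum_div, ← jsDiv_eq_sum_jsSummand] at hJS
  have hlim : (∑ x : X, (deriv (fun t => P t x) γ) ^ 2 / P γ x) / 8 =
      ∑ x : X, deriv (fun t => P t x) γ ^ 2 / (8 * P γ x) := by
    rw [Finset.sum_div]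
    exact Finset.sum_congr rfl fun x _ => by rw [div_div, mul_comm]
  rw [← hlim] at hJS
  refine ⟨hJS, ?_⟩
  simpa only [← mul_div_assoc, mul_div_cancel_left₀ _ (by norm_num : (8 : ℝ) ≠ 0)] using
    hJS.const_mul 8

/-- second-order expansion of the Jensen–Shannon divergence:
`JS[P(·|γ), P(·|γ+δγ)]/δγ² → F(γ)/8` as `δγ → 0`. -/
theorem stmt15 {X : Type*} [Fintype X] [Nonempty X]
    (I : Set ℝ) (hIopen : IsOpen I) (hIconn : I.OrdConnected)
    (P : ℝ → X → ℝ)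
    (hpos : ∀ γ ∈ I, ∀ x : X, 0 < P γ x)
    (hsum : ∀ γ ∈ I, ∑ x : X, P γ x = 1)
    (hC2 : ∀ x : X, ContDiffOn ℝ 2 (fun t => P t x) I)
    (γ : ℝ) (hγ : γ ∈ I) :
    Filter.Tendsto (fun δ : ℝ => jsDiv (P γ) (P (γ + δ)) / δ ^ 2)
      (𝓝[≠] 0)
      (𝓝 ((∑ x : X, (deriv (fun t => P t x) γ) ^ 2 / P γ x) / 8)) ∧
    Filter.Tendsto (fun δ : ℝ => 8 * jsDiv (P γ) (P (γ + δ)) / δ ^ 2)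
      (𝓝[≠] 0)
      (𝓝 (∑ x : X, (deriv (fun t => P t x) γ) ^ 2 / P γ x)) :=
  stmt15_general I hIopen P hpos hC2 γ hγ
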